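/- Let D_1 = δ and D_2 = ∂_0. For any λ, λ_0, λ_1, …, λ_d ∈ K, set f = λ·x_2 + Σ_{k=0}^d λ_k · x_1^k ∏_{j=3}^m x_j^{α_{j2} − k·α_{j1}} ∈ C. Then for all s_1, s_2 ∈ K: (s_1 D_1 + s_2 D_2)(f) = 0 if and only if λ·s_2 + λ_1·s_1 = 0 and λ_k·s_1 = 0 for all 2 ≤ k ≤ d. -/

import Mathlib

open MvPolynomial Finset

lemma aux_prod_X_pow {σ R : Type*} [CommSemiring R] (S : Finset σ) (e : σ → ℕ) :
    ∏ j ∈ S, (X j : MvPolynomial σ R) ^ e j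
      = monomial (∑ j ∈ S, Finsupp.single j (e j)) 1 := by
  classical
  induction S using Finset.induction with
  | empty => simp [monomial_zero']
  | insert _ _ hj ih =>
      rw [Finset.prod_insert hj, Finset.sum_insert hj, ih, X_pow_eq_monomial,
        monomial_mul, one_mul]

lemma aux_sum_single_apply {σ : Type*} [DecidableEq σ] (S : Finset σ) (e : σ → ℕ) (i : σ) :
    (∑ j ∈ S, Finsupp.single j (e j)) i = if i ∈ S then e i else 0 := by
  rw [Finsupp.finset_sum_apply]
  simp [Finsupp.single_apply]


/-- The derivation `δ = (∏_{j=3}^m x_j^{α_{j1}}) ∂/∂x_1` of `K[x_1, …, x_m]`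
(variables are indexed by `Fin m`, so `x_1` is `X ⟨0,_⟩`, `x_2` is `X ⟨1,_⟩`, and the
indices `3 ≤ j ≤ m` are those `j : Fin m` with `2 ≤ j.val`). -/
noncomputable def deltaD (K : Type*) [Field K] (m : ℕ) (hm : 2 ≤ m) (α1 : Fin m → ℕ) :
    Derivation K (MvPolynomial (Fin m) K) (MvPolynomial (Fin m) K) :=
  (∏ j ∈ Finset.univ.filter (fun j : Fin m => 2 ≤ j.val),
      (X j : MvPolynomial (Fin m) K) ^ α1 j) • pderiv (⟨0, by omega⟩ : Fin m)

/-- The derivation `∂_k = x_1^k (∏_{j=3}^m x_j^{α_{j2} - k α_{j1}}) ∂/∂x_2`. -/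
noncomputable def partialD (K : Type*) [Field K] (m : ℕ) (hm : 2 ≤ m)
    (α1 α2 : Fin m → ℕ) (k : ℕ) :
    Derivation K (MvPolynomial (Fin m) K) (MvPolynomial (Fin m) K) :=
  ((X (⟨0, by omega⟩ : Fin m) : MvPolynomial (Fin m) K) ^ k *
      ∏ j ∈ Finset.univ.filter (fun j : Fin m => 2 ≤ j.val),
        (X j : MvPolynomial (Fin m) K) ^ (α2 j - k * α1 j)) •
    pderiv (⟨1, by omega⟩ : Fin m)

/-- (Annihilator computation for the normalized action.) For
`D_1 = δ`, `D_2 = ∂_0` and `f = λ x_2 + Σ_{k=0}^d λ_k x_1^k ∏_{j=3}^m x_j^{α_{j2}-kα_{j1}}`,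
one has `(s_1 D_1 + s_2 D_2)(f) = 0` iff `λ s_2 + λ_1 s_1 = 0` and `λ_k s_1 = 0` for all
`2 ≤ k ≤ d`. -/
theorem stmt18 (K : Type*) [Field K] [CharZero K] (m : ℕ) (hm : 2 ≤ m)
    (α1 α2 : Fin m → ℕ) (d : ℕ) (hd : 1 ≤ d)
    (hα : ∀ j : Fin m, 2 ≤ j.val → d * α1 j ≤ α2 j)
    (lam0 : K) (lam : ℕ → K) :
    ∀ s1 s2 : K,
      (s1 • deltaD K m hm α1 + s2 • partialD K m hm α1 α2 0)
          (lam0 • (X (⟨1, by omega⟩ : Fin m) : MvPolynomial (Fin m) K) +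
            ∑ k ∈ Finset.range (d + 1), lam k •
              ((X (⟨0, by omega⟩ : Fin m) : MvPolynomial (Fin m) K) ^ k *
                ∏ j ∈ Finset.univ.filter (fun j : Fin m => 2 ≤ j.val),
                  (X j : MvPolynomial (Fin m) K) ^ (α2 j - k * α1 j))) = 0 ↔
        (lam0 * s2 + lam 1 * s1 = 0 ∧ ∀ k : ℕ, 2 ≤ k → k ≤ d → lam k * s1 = 0) := by
  classical
  intro s1 s2
  set o : Fin m := ⟨0, by omega⟩ with ho
  set i1 : Fin m := ⟨1, by omega⟩ with hi1
  set S : Finset (Fin m) := Finset.univ.filter (fun j : Fin m => 2 ≤ j.val) with hS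
  have hoS : o ∉ S := by simp [hS, ho]
  have hi1S : i1 ∉ S := by simp [hS, hi1]
  have hoi1 : i1 ≠ o := by simp [ho, hi1, Fin.ext_iff]
  -- exponent vectors
  set u : ℕ → (Fin m →₀ ℕ) :=
    fun k => Finsupp.single o k + ∑ j ∈ S, Finsupp.single j (α2 j - k * α1 j) with hu
  have huo : ∀ k, u k o = k := by
    intro k
    show (Finsupp.single o k + ∑ j ∈ S, Finsupp.single j (α2 j - k * α1 j)) o = k
    rw [Finsupp.add_apply, aux_sum_single_apply, Finsupp.single_eq_same, if_neg hoS,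
      add_zero]
  have hui1 : ∀ k, u k i1 = 0 := by
    intro k
    show (Finsupp.single o k + ∑ j ∈ S, Finsupp.single j (α2 j - k * α1 j)) i1 = 0
    rw [Finsupp.add_apply, aux_sum_single_apply, if_neg hi1S,
      Finsupp.single_apply, if_neg (Ne.symm hoi1), add_zero]
  set p : Fin m →₀ ℕ := ∑ j ∈ S, Finsupp.single j (α1 j) with hp
  -- monomial forms
  have hmon : ∀ k : ℕ,
      (X o : MvPolynomial (Fin m) K) ^ k * ∏ j ∈ S, (X j : MvPolynomial (Fin m) K) ^ (α2 j - k * α1 j)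
        = monomial (u k) 1 := by
    intro k
    rw [aux_prod_X_pow, X_pow_eq_monomial, monomial_mul, one_mul]
  have hP : (∏ j ∈ S, (X j : MvPolynomial (Fin m) K) ^ α1 j) = monomial p 1 :=
    aux_prod_X_pow S α1
  -- key exponent identity
  have hkey : ∀ t : ℕ, t + 1 ≤ d → p + (u (t + 1) - Finsupp.single o 1) = u t := by
    intro t ht
    ext i
    rw [Finsupp.add_apply, Finsupp.tsub_apply, Finsupp.add_apply, Finsupp.add_apply]
    rw [aux_sum_single_apply, aux_sum_single_apply, aux_sum_single_apply,
      Finsupp.single_apply, Finsupp.single_apply, Finsupp.single_apply]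
    by_cases hiS : i ∈ S
    · have hio : ¬ (o = i) := by
        rintro rfl; exact hoS hiS
      have h1 : t * α1 i + α1 i ≤ α2 i :=
        calc t * α1 i + α1 i = (t + 1) * α1 i := by ring
          _ ≤ d * α1 i := Nat.mul_le_mul_right _ ht
          _ ≤ α2 i := hα i (by simpa [hS] using hiS)
      simp only [if_pos hiS, hio, if_false]
      rw [add_one_mul]
      omega
    · simp only [if_neg hiS]
      by_cases hio : o = i <;> simp [hio] <;> omega
  -- derivation values on monomials
  have hdelta : ∀ k : ℕ, (deltaD K m hm α1) (monomial (u k) (1:K))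
      = monomial (p + (u k - Finsupp.single o 1)) ((k : K)) := by
    intro k
    show (_ • pderiv o) (monomial (u k) (1:K)) = _
    rw [Derivation.smul_apply, pderiv_monomial, ← hS, hP, smul_eq_mul, monomial_mul,
      one_mul, one_mul, huo]
  have hpart : ∀ k : ℕ, (partialD K m hm α1 α2 0) (monomial (u k) (1:K)) = 0 := by
    intro k
    show (_ • pderiv i1) (monomial (u k) (1:K)) = _
    rw [Derivation.smul_apply, pderiv_monomial, hui1]
    simp
  have hdeltaX : (deltaD K m hm α1) (X i1) = 0 := by
    show (_ • pderiv o) (X i1) = _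
    rw [Derivation.smul_apply, pderiv_X_of_ne hoi1, smul_zero]
  have hpartX : (partialD K m hm α1 α2 0) (X i1) = monomial (u 0) 1 := by
    show (_ • pderiv i1) (X i1) = _
    rw [Derivation.smul_apply, pderiv_X_self, smul_eq_mul, mul_one, pow_zero, one_mul,
      ← hS]
    have : (fun j => α2 j - 0 * α1 j) = fun j => α2 j := by funext j; simp
    rw [show (∏ j ∈ S, (X j : MvPolynomial (Fin m) K) ^ (α2 j - 0 * α1 j))
        = monomial (u 0) 1 from by
      rw [aux_prod_X_pow]
      congr 1
      simp [hu]]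
  -- coefficients
  set c : ℕ → K := fun t =>
    s1 * (lam (t + 1) * ((t + 1 : ℕ) : K)) + (if t = 0 then s2 * lam0 else 0) with hc
  -- rewrite the polynomial into monomial form
  simp only [hmon]
  rw [Derivation.add_apply, Derivation.smul_apply, Derivation.smul_apply,
    map_add, map_add, map_sum, map_sum]
  simp only [Derivation.map_smul, hdelta, hpart, hdeltaX, hpartX, smul_zero,
    Finset.sum_const_zero, add_zero, zero_add]
  rw [Finset.sum_range_succ']
  simp only [Nat.cast_zero, monomial_zero, smul_zero, add_zero]
  have hsum : (∑ t ∈ Finset.range d,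
        lam (t + 1) • monomial (p + (u (t + 1) - Finsupp.single o 1)) (((t + 1 : ℕ)) : K))
      = ∑ t ∈ Finset.range d, monomial (u t) (lam (t + 1) * ((t + 1 : ℕ) : K)) := by
    refine Finset.sum_congr rfl fun t ht => ?_
    rw [hkey t (Nat.succ_le_of_lt (Finset.mem_range.mp ht)),
      smul_monomial, smul_eq_mul]
  rw [hsum]
  have heq : s1 • (∑ t ∈ Finset.range d, monomial (u t) (lam (t + 1) * ((t + 1 : ℕ) : K)))
        + s2 • lam0 • monomial (u 0) (1 : K)
      = ∑ t ∈ Finset.range d, monomial (u t) (c t) := by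
    have h2 : (∑ t ∈ Finset.range d, monomial (u t) (c t))
        = (∑ t ∈ Finset.range d, monomial (u t) (s1 * (lam (t + 1) * ((t + 1 : ℕ) : K))))
          + ∑ t ∈ Finset.range d, monomial (u t) (if t = 0 then s2 * lam0 else 0) := by
      rw [← Finset.sum_add_distrib]
      exact Finset.sum_congr rfl fun t _ => by rw [hc, ← map_add]
    rw [h2, Finset.smul_sum]
    congr 1
    · exact Finset.sum_congr rfl fun t _ => by rw [smul_monomial, smul_eq_mul]
    · have h3 : (∑ t ∈ Finset.range d, monomial (u t) (if t = 0 then s2 * lam0 else 0))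
          = ∑ t ∈ Finset.range d, if t = 0 then monomial (u t) (s2 * lam0) else 0 := by
        refine Finset.sum_congr rfl fun t _ => ?_
        split <;> simp
      rw [h3, Finset.sum_ite_eq' (Finset.range d) 0,
        if_pos (Finset.mem_range.mpr (by omega)), smul_monomial, smul_monomial,
        smul_eq_mul, smul_eq_mul, mul_one]
  rw [heq]
  -- zero iff all coefficients vanish
  have hzero : (∑ t ∈ Finset.range d, monomial (u t) (c t)) = 0 ↔
      ∀ t ∈ Finset.range d, c t = 0 := by
    constructor
    · intro h t ht
      have hco := congrArg (coeff (u t)) h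
      rw [coeff_sum, coeff_zero] at hco
      rw [Finset.sum_eq_single t (fun t' _ hne => by
          rw [coeff_monomial, if_neg (fun he => hne (by
            have := congrArg (fun v : Fin m →₀ ℕ => v o) he
            simpa [huo] using this))]) (fun h' => absurd ht h')] at hco
      rwa [coeff_monomial, if_pos rfl] at hco
    · intro h
      exact Finset.sum_eq_zero fun t ht => by rw [h t ht, monomial_zero]
  rw [hzero]
  constructor
  · intro h
    constructor
    · have h0 := h 0 (Finset.mem_range.mpr (by omega))
      rw [hc] at h0
      simp only [eq_self_iff_true, if_true, Nat.cast_one, mul_one] at h0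
      linear_combination h0
    · intro k hk2 hkd
      have ht := h (k - 1) (Finset.mem_range.mpr (by omega))
      rw [hc] at ht
      simp only [if_neg (by omega : ¬(k - 1 = 0)), add_zero,
        (by omega : k - 1 + 1 = k)] at ht
      have hkne : ((k : ℕ) : K) ≠ 0 := Nat.cast_ne_zero.mpr (by omega)
      have ht' : (lam k * s1) * ((k : ℕ) : K) = 0 := by linear_combination ht
      exact (mul_eq_zero.mp ht').resolve_right hkne
  · rintro ⟨h1, h2⟩ t ht
    simp only [hc]
    by_cases t0 : t = 0
    · subst t0
      simp only [eq_self_iff_true, if_true, Nat.cast_one, mul_one]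
      linear_combination h1
    · rw [if_neg t0, add_zero]
      have := h2 (t + 1) (by omega) (by have := Finset.mem_range.mp ht; omega)
      linear_combination ((t + 1 : ℕ) : K) * this
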